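/- arXiv:1804.10100 — 2 statements merged into one kernel-verified Lean document; each statement's English description precedes it below -/
import Mathlib

section
/- The power operators satisfy the composition rule I_{q,r} ∘ I_{r,p} = I_{q,p} on positive definite matrices, and I_{p,p}(X) = X for positive semi-definite X. -/
open Matrix BigOperators
open scoped ComplexOrder

noncomputable section

variable {n : Type*} [Fintype n] [DecidableEq n]

/-- Apply a real function to a matrix via its spectral decomposition
(defined to be `0` if the matrix is not Hermitian). -/
noncomputable def matFun (A : Matrix n n ℂ) (f : ℝ → ℝ) : Matrix n n ℂ :=
  if hA : A.IsHermitian then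
    (hA.eigenvectorUnitary : Matrix n n ℂ) *
      Matrix.diagonal (fun i => (f (hA.eigenvalues i) : ℂ)) *
      star (hA.eigenvectorUnitary : Matrix n n ℂ)
  else 0

/-- Real power of a (Hermitian) matrix. -/
noncomputable def mpow (A : Matrix n n ℂ) (r : ℝ) : Matrix n n ℂ :=
  matFun A (fun x => x ^ r)

/-- Logarithm of a (Hermitian) matrix. -/
noncomputable def mlog (A : Matrix n n ℂ) : Matrix n n ℂ :=
  matFun A Real.log

/-- Absolute value `|X| = √(X† X)` of a matrix. -/
noncomputable def mAbs (X : Matrix n n ℂ) : Matrix n n ℂ :=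
  mpow (Xᴴ * X) (1/2 : ℝ)

/-- Schatten `p`-(quasi)norm `(tr |X|^p)^{1/p}`. -/
noncomputable def schatten (p : ℝ) (X : Matrix n n ℂ) : ℝ :=
  ((mpow (mAbs X) p).trace.re) ^ (1/p)

/-- `Γ_σ^{1/p}(X) = σ^{1/(2p)} X σ^{1/(2p)}`. -/
noncomputable def gammaPow (σ : Matrix n n ℂ) (p : ℝ) (X : Matrix n n ℂ) :
    Matrix n n ℂ :=
  mpow σ (1/(2*p)) * X * mpow σ (1/(2*p))

/-- Weighted norm `‖X‖_{p,σ} = ‖Γ_σ^{1/p}(X)‖_p`. -/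
noncomputable def wnorm (σ : Matrix n n ℂ) (p : ℝ) (X : Matrix n n ℂ) : ℝ :=
  schatten p (gammaPow σ p X)

/-- The power operator `I_{q,p}(X) = Γ_σ^{-1/q}(|Γ_σ^{1/p}(X)|^{p/q})`. -/
noncomputable def powOp (σ : Matrix n n ℂ) (q p : ℝ) (X : Matrix n n ℂ) :
    Matrix n n ℂ :=
  mpow σ (-(1/(2*q))) * mpow (mAbs (gammaPow σ p X)) (p/q) * mpow σ (-(1/(2*q)))

/-- Umegaki relative entropy `D(ρ‖σ) = tr(ρ log ρ) - tr(ρ log σ)`. -/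
noncomputable def relEnt (ρ σ : Matrix n n ℂ) : ℝ :=
  ((ρ * mlog ρ).trace - (ρ * mlog σ).trace).re

/-- The entropy function `Ent_{p,σ}(X)`. -/
noncomputable def Ent (σ : Matrix n n ℂ) (p : ℝ) (X : Matrix n n ℂ) : ℝ :=
  ((mpow (gammaPow σ p X) p * mlog (mpow (gammaPow σ p X) p)).trace).re -
    ((mpow (gammaPow σ p X) p * mlog σ).trace).re -
    (wnorm σ p X) ^ p * Real.log ((wnorm σ p X) ^ p)

end

/-!
`I_{r,p}(X)` is `|Γ_σ^{1/p}(X)|^{p/r}` conjugated by `σ^{-1/(2r)}`, and `Γ_σ^{1/r}` undoes exactly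
this conjugation, since `σ^{1/(2r)} σ^{-1/(2r)} = 1` for `σ > 0`. Hence `I_{q,r}(I_{r,p}(X))` is
`| |Γ_σ^{1/p}(X)|^{p/r} |^{r/q}` conjugated by `σ^{-1/(2q)}`; the inner matrix is positive
semidefinite, so it is its own absolute value, and `(A^{p/r})^{r/q} = A^{p/q}` for `A ≥ 0`.
For `X ≥ 0`, `Γ_σ^{1/p}(X) ≥ 0` is its own absolute value and `I_{p,p}` merely conjugates it back.
-/

section MatrixPower

variable {n : Type*} [Fintype n] [DecidableEq n]

lemma matFun_eq_cfc {A : Matrix n n ℂ} (hA : A.IsHermitian) (f : ℝ → ℝ) :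
    matFun A f = cfc f A := by
  rw [matFun, dif_pos hA, hA.cfc_eq]
  rfl

lemma mpow_eq_cfc {A : Matrix n n ℂ} (hA : A.IsHermitian) (r : ℝ) :
    mpow A r = cfc (fun x : ℝ => x ^ r) A :=
  matFun_eq_cfc hA _

lemma Matrix.continuousOn_real_spectrum (A : Matrix n n ℂ) (f : ℝ → ℝ) :
    ContinuousOn f (spectrum ℝ A) :=
  A.finite_real_spectrum.continuousOn f

lemma Matrix.PosSemidef.spectrum_real_nonneg {A : Matrix n n ℂ} (hA : A.PosSemidef) {x : ℝ}
    (hx : x ∈ spectrum ℝ A) : 0 ≤ x := by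
  rw [hA.1.spectrum_real_eq_range_eigenvalues] at hx
  obtain ⟨i, rfl⟩ := hx
  exact hA.eigenvalues_nonneg i

lemma Matrix.PosDef.spectrum_real_pos {A : Matrix n n ℂ} (hA : A.PosDef) {x : ℝ}
    (hx : x ∈ spectrum ℝ A) : 0 < x := by
  rw [hA.1.spectrum_real_eq_range_eigenvalues] at hx
  obtain ⟨i, rfl⟩ := hx
  exact hA.eigenvalues_pos i

lemma mpow_isHermitian (A : Matrix n n ℂ) (r : ℝ) : (mpow A r).IsHermitian := by
  by_cases hA : A.IsHermitian
  · rw [mpow_eq_cfc hA]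
    exact cfc_predicate _ A
  · simp [mpow, matFun, hA]

open scoped MatrixOrder in
lemma mpow_posSemidef {A : Matrix n n ℂ} (hA : A.PosSemidef) (r : ℝ) :
    (mpow A r).PosSemidef := by
  rw [← nonneg_iff_posSemidef, mpow_eq_cfc hA.1]
  exact cfc_nonneg fun x hx => Real.rpow_nonneg (hA.spectrum_real_nonneg hx) r

lemma mpow_natCast {A : Matrix n n ℂ} (hA : A.IsHermitian) (k : ℕ) : mpow A k = A ^ k := by
  simp only [mpow_eq_cfc hA, Real.rpow_natCast]
  exact cfc_pow_id A k hA

lemma mpow_zero {A : Matrix n n ℂ} (hA : A.IsHermitian) : mpow A 0 = 1 := by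
  simpa using mpow_natCast hA 0

lemma mpow_one {A : Matrix n n ℂ} (hA : A.IsHermitian) : mpow A 1 = A := by
  simpa using mpow_natCast hA 1

lemma mpow_add {A : Matrix n n ℂ} (hA : A.PosDef) (a b : ℝ) :
    mpow A (a + b) = mpow A a * mpow A b := by
  rw [mpow_eq_cfc hA.1, mpow_eq_cfc hA.1, mpow_eq_cfc hA.1,
    ← cfc_mul _ _ A (A.continuousOn_real_spectrum _) (A.continuousOn_real_spectrum _)]
  exact cfc_congr fun x hx => Real.rpow_add (hA.spectrum_real_pos hx) a b

lemma mpow_mpow {A : Matrix n n ℂ} (hA : A.PosSemidef) (a b : ℝ) :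
    mpow (mpow A a) b = mpow A (a * b) := by
  rw [mpow_eq_cfc (mpow_isHermitian A a), mpow_eq_cfc hA.1, mpow_eq_cfc hA.1]
  refine (cfc_comp (fun x : ℝ => x ^ b) (fun x : ℝ => x ^ a) A hA.1
    (Set.Finite.continuousOn (A.finite_real_spectrum.image _) _)
    (A.continuousOn_real_spectrum _)).symm.trans ?_
  exact cfc_congr fun x hx => (Real.rpow_mul (hA.spectrum_real_nonneg hx) a b).symm

lemma mpow_mul_mpow_neg {A : Matrix n n ℂ} (hA : A.PosDef) (a : ℝ) :
    mpow A a * mpow A (-a) = 1 := by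
  rw [← mpow_add hA, add_neg_cancel, mpow_zero hA.1]

lemma mpow_mul_mpow_neg_mul_mul_mpow_neg_mul_mpow {A : Matrix n n ℂ} (hA : A.PosDef) (a : ℝ)
    (Z : Matrix n n ℂ) : mpow A a * (mpow A (-a) * Z * mpow A (-a)) * mpow A a = Z := by
  have hneg : mpow A (-a) * mpow A a = 1 := by simpa using mpow_mul_mpow_neg hA (-a)
  simp only [← mul_assoc, mpow_mul_mpow_neg hA, one_mul]
  rw [mul_assoc, hneg, mul_one]

lemma mAbs_posSemidef (X : Matrix n n ℂ) : (mAbs X).PosSemidef :=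
  mpow_posSemidef (posSemidef_conjTranspose_mul_self X) _

lemma mAbs_of_posSemidef {Y : Matrix n n ℂ} (hY : Y.PosSemidef) : mAbs Y = Y := by
  have hsq : Yᴴ * Y = mpow Y (2 : ℕ) := by rw [mpow_natCast hY.1, hY.1.eq, sq]
  rw [mAbs, hsq, mpow_mpow hY]
  norm_num [mpow_one hY.1]

end MatrixPower

section PowerOperator

variable {n : Type*} [Fintype n] [DecidableEq n] {σ : Matrix n n ℂ}

lemma gammaPow_posSemidef {p : ℝ} {X : Matrix n n ℂ} (hX : X.PosSemidef) :
    (gammaPow σ p X).PosSemidef := by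
  simpa only [gammaPow, (mpow_isHermitian σ _).eq] using
    hX.mul_mul_conjTranspose_same (mpow σ (1 / (2 * p)))

lemma gammaPow_powOp (hσ : σ.PosDef) (q p : ℝ) (X : Matrix n n ℂ) :
    gammaPow σ q (powOp σ q p X) = mpow (mAbs (gammaPow σ p X)) (p / q) :=
  mpow_mul_mpow_neg_mul_mul_mpow_neg_mul_mpow hσ _ _

lemma powOp_powOp (hσ : σ.PosDef) {r : ℝ} (hr : r ≠ 0) (q p : ℝ) (X : Matrix n n ℂ) :
    powOp σ q r (powOp σ r p X) = powOp σ q p X := by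
  have hY := mAbs_posSemidef (gammaPow σ p X)
  rw [powOp, gammaPow_powOp hσ, mAbs_of_posSemidef (mpow_posSemidef hY _), mpow_mpow hY,
    div_mul_div_cancel₀ hr, powOp]

lemma powOp_self (hσ : σ.PosDef) {p : ℝ} (hp : p ≠ 0) {X : Matrix n n ℂ} (hX : X.PosSemidef) :
    powOp σ p p X = X := by
  have hY : (gammaPow σ p X).PosSemidef := gammaPow_posSemidef hX
  rw [powOp, mAbs_of_posSemidef hY, div_self hp, mpow_one hY.1, gammaPow]
  simpa using mpow_mul_mpow_neg_mul_mul_mpow_neg_mul_mpow hσ (-(1 / (2 * p))) X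

end PowerOperator

theorem powOp_comp_general {m : Type*} [Fintype m] [DecidableEq m]
    (σ : Matrix m m ℂ) (hσ : σ.PosDef)
    (p q r : ℝ) (hp : p ≠ 0) (hr : r ≠ 0) :
    (∀ X : Matrix m m ℂ, X.PosDef → powOp σ q r (powOp σ r p X) = powOp σ q p X) ∧
    (∀ X : Matrix m m ℂ, X.PosSemidef → powOp σ p p X = X) :=
  ⟨fun X _ => powOp_powOp hσ hr q p X, fun _ hX => powOp_self hσ hp hX⟩

/-- Composition rule for power operators: `I_{q,r} ∘ I_{r,p} = I_{q,p}` on positive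
definite matrices, and `I_{p,p}(X) = X` for positive semi-definite `X`. -/
theorem powOp_comp {m : Type*} [Fintype m] [DecidableEq m]
    (σ : Matrix m m ℂ) (hσ : σ.PosDef) (hσ1 : σ.trace = 1)
    (p q r : ℝ) (hp : p ≠ 0) (hq : q ≠ 0) (hr : r ≠ 0) :
    (∀ X : Matrix m m ℂ, X.PosDef → powOp σ q r (powOp σ r p X) = powOp σ q p X) ∧
    (∀ X : Matrix m m ℂ, X.PosSemidef → powOp σ p p X = X) :=
  powOp_comp_general σ hσ p q r hp hr
end

section
/- For the simple Lindblad generator L(X) = X − tr(σX)·I with σ > 0, and any density matrix ρ commuting with σ considered via X = Γ_σ^{-1/2}(√ρ) = σ^{-1/4} √ρ σ^{-1/4}: the Dirichlet form evaluates as ⟨X, L(X)⟩_σ = 1 − (tr(√σ √ρ))², and the entropy evaluates as Ent_{2,σ}(X) = D(ρ‖σ). -/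
open Matrix BigOperators
open scoped ComplexOrder

/-
Write `X = σ^{-1/4} √ρ σ^{-1/4}`. Since all powers of `σ` come from one spectral decomposition,
`σ^a σ^b = σ^{a+b}`, so the powers of `σ` around `X` cancel under the trace:
`tr(σ^{1/2} X σ^{1/2} X) = tr ρ = 1` and `tr(σ X) = tr(σ^{1/2} X σ^{1/2}) = tr(√σ √ρ)`, which is
real as the trace of a product of two Hermitian matrices. For the entropy, `Γ_σ^{1/2}(X) = √ρ`, so
`‖X‖_{2,σ} = (tr ρ)^{1/2} = 1` and the first two terms of `Ent_{2,σ}(X)` are those of `D(ρ‖σ)`.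
-/

theorem Matrix.IsHermitian.im_trace_mul_eq_zero {n : Type*} [Fintype n] {A B : Matrix n n ℂ}
    (hA : A.IsHermitian) (hB : B.IsHermitian) : (A * B).trace.im = 0 := by
  rw [← Complex.conj_eq_iff_im, ← Complex.star_def, ← trace_conjTranspose, conjTranspose_mul, hA.eq,
    hB.eq, trace_mul_comm]

section

variable {n : Type*} [Fintype n] [DecidableEq n]

section matFun

variable {A : Matrix n n ℂ} (hA : A.IsHermitian)
include hA

theorem matFun_of_isHermitian (f : ℝ → ℝ) :
    matFun A f = (hA.eigenvectorUnitary : Matrix n n ℂ) *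
      diagonal (fun i => (f (hA.eigenvalues i) : ℂ)) *
      star (hA.eigenvectorUnitary : Matrix n n ℂ) :=
  dif_pos hA

theorem isHermitian_matFun (f : ℝ → ℝ) : (matFun A f).IsHermitian := by
  rw [matFun_of_isHermitian hA, IsHermitian]
  simp [conjTranspose_mul, diagonal_conjTranspose, mul_assoc, star_eq_conjTranspose, Pi.star_def]

theorem matFun_mul_matFun (f g : ℝ → ℝ) :
    matFun A f * matFun A g = matFun A (fun x => f x * g x) := by
  have hU : star (hA.eigenvectorUnitary : Matrix n n ℂ) * hA.eigenvectorUnitary = 1 :=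
    mem_unitaryGroup_iff'.mp hA.eigenvectorUnitary.2
  simp only [matFun_of_isHermitian hA, mul_assoc]
  rw [← mul_assoc (star _) (hA.eigenvectorUnitary : Matrix n n ℂ), hU, one_mul,
    ← mul_assoc (diagonal _), diagonal_mul_diagonal]
  simp [Complex.ofReal_mul]

theorem matFun_congr {f g : ℝ → ℝ} (h : ∀ i, f (hA.eigenvalues i) = g (hA.eigenvalues i)) :
    matFun A f = matFun A g := by
  simp only [matFun_of_isHermitian hA, h]

theorem matFun_id : matFun A (fun x => x) = A :=
  (matFun_of_isHermitian hA _).trans hA.spectral_theorem.symm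

theorem matFun_one : matFun A (fun _ => 1) = 1 := by
  have hU : (hA.eigenvectorUnitary : Matrix n n ℂ) * star (hA.eigenvectorUnitary : Matrix n n ℂ) =
      1 :=
    mem_unitaryGroup_iff.mp hA.eigenvectorUnitary.2
  simp [matFun_of_isHermitian hA, hU]

theorem isHermitian_mpow (r : ℝ) : (mpow A r).IsHermitian := isHermitian_matFun hA _

theorem mpow_zero_s18 : mpow A 0 = 1 :=
  (matFun_congr hA fun _ => Real.rpow_zero _).trans (matFun_one hA)

theorem mpow_one_s18 : mpow A 1 = A :=
  (matFun_congr hA fun _ => Real.rpow_one _).trans (matFun_id hA)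

theorem mpow_two : mpow A 2 = A * A := by
  rw [mpow, matFun_congr hA (g := fun x => x * x) fun _ => by norm_num [sq],
    ← matFun_mul_matFun hA, matFun_id hA]

end matFun

section mpow

variable {σ : Matrix n n ℂ} (hσ : σ.PosDef)
include hσ

theorem mpow_mul_mpow (a b : ℝ) : mpow σ a * mpow σ b = mpow σ (a + b) :=
  (matFun_mul_matFun hσ.1 _ _).trans
    (matFun_congr hσ.1 fun i => (Real.rpow_add (hσ.eigenvalues_pos i) a b).symm)

theorem mpow_half_mul_mpow_half : mpow σ (1 / 2) * mpow σ (1 / 2) = σ := by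
  rw [mpow_mul_mpow hσ, add_halves, mpow_one_s18 hσ.1]

theorem mpow_mpow_half_two : mpow (mpow σ (1 / 2)) 2 = σ := by
  rw [mpow_two (isHermitian_mpow hσ.1 _), mpow_half_mul_mpow_half hσ]

theorem mAbs_mpow_half : mAbs (mpow σ (1 / 2)) = mpow σ (1 / 2) := by
  rw [mAbs, (isHermitian_mpow hσ.1 _).eq, mpow_half_mul_mpow_half hσ]

theorem schatten_two_mpow_half : schatten 2 (mpow σ (1 / 2)) = σ.trace.re ^ (1 / 2 : ℝ) := by
  rw [schatten, mAbs_mpow_half hσ, mpow_mpow_half_two hσ]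

theorem mpow_mul_sandwich_mul_mpow (M : Matrix n n ℂ) (a b c d : ℝ) :
    mpow σ a * (mpow σ b * M * mpow σ c) * mpow σ d = mpow σ (a + b) * M * mpow σ (c + d) := by
  simp only [← mpow_mul_mpow hσ, mul_assoc]

theorem gammaPow_gammaPow_neg (p : ℝ) (M : Matrix n n ℂ) :
    gammaPow σ p (gammaPow σ (-p) M) = M := by
  have hexp : 1 / (2 * p) + 1 / (2 * -p) = 0 := by rw [mul_neg, div_neg, add_neg_cancel]
  rw [gammaPow, gammaPow, mpow_mul_sandwich_mul_mpow hσ, hexp, add_comm, hexp, mpow_zero_s18 hσ.1,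
    one_mul, mul_one]

theorem trace_mpow_mul_mul_mpow (M : Matrix n n ℂ) (a b : ℝ) :
    (mpow σ a * M * mpow σ b).trace = (mpow σ (b + a) * M).trace := by
  rw [trace_mul_cycle, ← mpow_mul_mpow hσ, mul_assoc]

theorem trace_sandwich_mul_sandwich_neg (M N : Matrix n n ℂ) (a : ℝ) :
    (mpow σ a * M * mpow σ a * (mpow σ (-a) * N * mpow σ (-a))).trace = (M * N).trace := by
  have hcancel : mpow σ a * mpow σ (-a) = 1 := by
    rw [mpow_mul_mpow hσ, add_neg_cancel, mpow_zero_s18 hσ.1]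
  calc (mpow σ a * M * mpow σ a * (mpow σ (-a) * N * mpow σ (-a))).trace
      = (mpow σ a * (M * N) * mpow σ (-a)).trace := by
        simp only [mul_assoc, ← mul_assoc (mpow σ a) (mpow σ (-a)), hcancel, one_mul]
    _ = (M * N).trace := by
        rw [trace_mpow_mul_mul_mpow hσ, neg_add_cancel, mpow_zero_s18 hσ.1, one_mul]

end mpow

theorem Ent_two_eq_relEnt {σ ρ X : Matrix n n ℂ} (hρ : ρ.PosDef) (hρ1 : ρ.trace = 1)
    (hX : gammaPow σ 2 X = mpow ρ (1 / 2)) : Ent σ 2 X = relEnt ρ σ := by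
  have hnorm : wnorm σ 2 X = 1 := by
    rw [wnorm, hX, schatten_two_mpow_half hρ, hρ1, Complex.one_re, Real.one_rpow]
  rw [Ent, relEnt, hX, mpow_mpow_half_two hρ, hnorm]
  simp

end

theorem simple_generator_eval_general {n : Type*} [Fintype n] [DecidableEq n]
    (σ : Matrix n n ℂ) (hσ : σ.PosDef)
    (ρ : Matrix n n ℂ) (hρ : ρ.PosDef) (hρ1 : ρ.trace = 1)
    (X : Matrix n n ℂ) (hX : X = mpow σ (-(1/4)) * mpow ρ (1/2) * mpow σ (-(1/4))) :
    ((mpow σ (1/2) * X * mpow σ (1/2) * (X - (σ * X).trace • 1)).trace).re =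
      1 - (((mpow σ (1/2) * mpow ρ (1/2)).trace).re) ^ 2 ∧
    Ent σ 2 X = relEnt ρ σ := by
  set t := (mpow σ (1/2) * mpow ρ (1/2)).trace
  have ht : t.im = 0 := (isHermitian_mpow hσ.1 _).im_trace_mul_eq_zero (isHermitian_mpow hρ.1 _)
  have hS : mpow σ (1/2) * X * mpow σ (1/2) = mpow σ (1/4) * mpow ρ (1/2) * mpow σ (1/4) := by
    rw [hX, mpow_mul_sandwich_mul_mpow hσ]; norm_num
  have hSX : (mpow σ (1/4) * mpow ρ (1/2) * mpow σ (1/4) * X).trace = 1 := by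
    rw [hX, trace_sandwich_mul_sandwich_neg hσ, mpow_half_mul_mpow_half hρ, hρ1]
  have hStr : (mpow σ (1/4) * mpow ρ (1/2) * mpow σ (1/4)).trace = t := by
    rw [trace_mpow_mul_mul_mpow hσ]; norm_num [t]
  have hσX : (σ * X).trace = t := by
    rw [hX, ← mul_assoc, ← mul_assoc]
    nth_rw 1 [← mpow_one_s18 hσ.1]
    rw [mpow_mul_mpow hσ, trace_mpow_mul_mul_mpow hσ]
    norm_num [t]
  refine ⟨?_, Ent_two_eq_relEnt hρ hρ1 ?_⟩
  · rw [hS, mul_sub, trace_sub, hSX, mul_smul_comm, mul_one, trace_smul, hStr, hσX, smul_eq_mul]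
    simp [Complex.mul_re, ht, sq]
  · rw [hX, show (-(1/4) : ℝ) = 1 / (2 * -2) by norm_num]
    exact gammaPow_gammaPow_neg hσ 2 _

/-- For the simple Lindblad generator `L(X) = X - tr(σX)·I` and
`X = σ^{-1/4} √ρ σ^{-1/4}` with `ρ` a density matrix commuting with `σ`:
`⟨X, L(X)⟩_σ = 1 - (tr(√σ √ρ))²` and `Ent_{2,σ}(X) = D(ρ‖σ)`. -/
theorem simple_generator_eval {n : Type*} [Fintype n] [DecidableEq n]
    (σ : Matrix n n ℂ) (hσ : σ.PosDef) (hσ1 : σ.trace = 1)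
    (ρ : Matrix n n ℂ) (hρ : ρ.PosDef) (hρ1 : ρ.trace = 1)
    (hcomm : ρ * σ = σ * ρ)
    (X : Matrix n n ℂ) (hX : X = mpow σ (-(1/4)) * mpow ρ (1/2) * mpow σ (-(1/4))) :
    ((mpow σ (1/2) * X * mpow σ (1/2) * (X - (σ * X).trace • 1)).trace).re =
      1 - (((mpow σ (1/2) * mpow ρ (1/2)).trace).re) ^ 2 ∧
    Ent σ 2 X = relEnt ρ σ :=
  simple_generator_eval_general σ hσ ρ hρ hρ1 X hX
end
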